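/- Let U be a theory closed under modus ponens and necessitation rules [n], with provability predicates satisfying the GLP axioms and the deduction theorem ⟨n⟩_{U+φ} ψ ↔ ⟨n⟩_U(ψ ∧ φ). Then for n ≥ m, the closure of U + ⟨n⟩φ under the reflection rule Π_m-RR^n(U+φ) (from ψ ∈ Π_m infer ⟨n⟩(ψ ∧ φ)) adds nothing: U + Π_m-RR^n(U+φ) ≡ U + ⟨n⟩φ, assuming each ψ ∈ Π_m with m ≤ n satisfies U ⊢ ψ → [n]ψ (provable Σ_{n+1}-completeness). -/

import Mathlib

/-- Formulas of polymodal provability logic GLP_ω with modalities [n], n ∈ ℕ. -/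
inductive GLPFormula : Type where
  | bot : GLPFormula
  | var : ℕ → GLPFormula
  | imp : GLPFormula → GLPFormula → GLPFormula
  | and : GLPFormula → GLPFormula → GLPFormula
  | box : ℕ → GLPFormula → GLPFormula

namespace GLPFormula

def neg (A : GLPFormula) : GLPFormula := imp A bot
def top : GLPFormula := neg bot
def dia (n : ℕ) (A : GLPFormula) : GLPFormula := neg (box n (neg A))
def iff (A B : GLPFormula) : GLPFormula := and (imp A B) (imp B A)

/-- A formula is a propositional tautology if every boolean valuation commuting with
the propositional connectives (and arbitrary on boxes and variables) makes it true. -/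
def IsTaut (A : GLPFormula) : Prop :=
  ∀ v : GLPFormula → Bool, v bot = false →
    (∀ B C, v (imp B C) = (!v B || v C)) →
    (∀ B C, v (and B C) = (v B && v C)) →
    v A = true

/-- Hilbert-style provability in GLP_ω. -/
inductive Proof : GLPFormula → Prop where
  | taut {A} : IsTaut A → Proof A
  | k {n A B} : Proof ((box n (A.imp B)).imp ((box n A).imp (box n B)))
  | lob {n A} : Proof ((box n ((box n A).imp A)).imp (box n A))
  | mono {m n : ℕ} {A} : m ≤ n → Proof ((box m A).imp (box n A))
  | negIntro {m n : ℕ} {A} : m < n → Proof ((dia m A).imp (box n (dia m A)))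
  | mp {A B} : Proof (A.imp B) → Proof A → Proof B
  | nec {n A} : Proof A → Proof (box n A)

/-- Q^0_n(φ) = ⟨n⟩φ, Q^{k+1}_n(φ) = ⟨n⟩(φ ∧ Q^k_n(φ)). -/
def Q (n : ℕ) (φ : GLPFormula) : ℕ → GLPFormula
  | 0 => dia n φ
  | k + 1 => dia n (φ.and (Q n φ k))

/-- Worms: iterated consistency statements. -/
inductive IsWorm : GLPFormula → Prop where
  | top : IsWorm top
  | dia (n : ℕ) {A} : IsWorm A → IsWorm (dia n A)

end GLPFormula

open GLPFormula

/-- Derivability from a theory `U` (a set of formulas): GLP theorems and members of `U`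
are derivable, and derivability is closed under modus ponens. -/
inductive Deriv (U : Set GLPFormula) : GLPFormula → Prop where
  | ax {A} : A ∈ U → Deriv U A
  | glp {A} : Proof A → Deriv U A
  | mp {A B} : Deriv U (A.imp B) → Deriv U A → Deriv U B

/-- Closure of the theory `U` under the reflection rule Π-RR^n(U+φ):
from ψ ∈ Pi infer ⟨n⟩(ψ ∧ φ). -/
inductive RRClosure (U : Set GLPFormula) (Pi : Set GLPFormula) (n : ℕ) (φ : GLPFormula) :
    GLPFormula → Prop where
  | base {A} : Deriv U A → RRClosure U Pi n φ A
  | mp {A B} : RRClosure U Pi n φ (A.imp B) → RRClosure U Pi n φ A → RRClosure U Pi n φ B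
  | rr {ψ} : ψ ∈ Pi → RRClosure U Pi n φ ψ → RRClosure U Pi n φ (dia n (ψ.and φ))

/-! The closure contains `⟨n⟩φ`, obtained by one application of the rule to `⊤`. Conversely
`U + ⟨n⟩φ` is closed under the rule: from `ψ` it proves `[n]ψ`, and `[n]ψ ∧ ⟨n⟩φ → ⟨n⟩(ψ ∧ φ)`
holds already in the modal logic K. -/

namespace GLPFormula.Proof

variable {n : ℕ} {A B C : GLPFormula}

theorem imp_trans (hAB : Proof (A.imp B)) (hBC : Proof (B.imp C)) : Proof (A.imp C) :=
  mp (mp (taut fun v _ hi _ => by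
    simp only [hi]; cases v A <;> cases v B <;> cases v C <;> rfl) hAB) hBC

theorem imp_imp_neg_imp_neg : Proof ((A.imp B).imp (B.neg.imp A.neg)) :=
  taut fun v h0 hi _ => by simp only [neg, hi, h0]; cases v A <;> cases v B <;> rfl

theorem neg_imp_neg (h : Proof (A.imp B)) : Proof (B.neg.imp A.neg) :=
  mp imp_imp_neg_imp_neg h

theorem box_imp_box (h : Proof (A.imp B)) : Proof ((box n A).imp (box n B)) :=
  mp k (nec h)

theorem dia_imp_dia (h : Proof (A.imp B)) : Proof ((dia n A).imp (dia n B)) :=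
  neg_imp_neg (box_imp_box (neg_imp_neg h))

theorem trivial : Proof top :=
  taut fun v h0 hi _ => by simp only [top, neg, hi, h0]; rfl

theorem top_and_imp : Proof ((top.and A).imp A) :=
  taut fun v h0 hi ha => by simp only [top, neg, hi, ha, h0]; cases v A <;> rfl

theorem imp_neg_and_imp_neg : Proof (A.imp ((A.and B).neg.imp B.neg)) :=
  taut fun v h0 hi ha => by simp only [neg, hi, ha, h0]; cases v A <;> cases v B <;> rfl

theorem box_imp_dia_imp_dia_and : Proof ((box n A).imp ((dia n B).imp (dia n (A.and B)))) :=
  imp_trans (imp_trans (box_imp_box imp_neg_and_imp_neg) k) imp_imp_neg_imp_neg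

end GLPFormula.Proof

namespace Deriv

variable {U V : Set GLPFormula} {A : GLPFormula}

theorem mono (hUV : U ⊆ V) (h : Deriv U A) : Deriv V A := by
  induction h with
  | ax hA => exact ax (hUV hA)
  | glp hA => exact glp hA
  | mp _ _ ihAB ihA => exact mp ihAB ihA

theorem dia_and_of_imp_box {n : ℕ} {ψ φ : GLPFormula} (hψ : Deriv U (ψ.imp (box n ψ)))
    (hφ : Deriv U (dia n φ)) (h : Deriv U ψ) : Deriv U (dia n (ψ.and φ)) :=
  mp (mp (glp Proof.box_imp_dia_imp_dia_and) (mp hψ h)) hφ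

end Deriv

namespace RRClosure

variable {U Pi : Set GLPFormula} {n : ℕ} {φ A : GLPFormula}

theorem deriv_of_closed {T : Set GLPFormula} (hUT : U ⊆ T)
    (hT : ∀ ψ ∈ Pi, Deriv T ψ → Deriv T (dia n (ψ.and φ))) (h : RRClosure U Pi n φ A) :
    Deriv T A := by
  induction h with
  | base hA => exact hA.mono hUT
  | mp _ _ ihAB ihA => exact Deriv.mp ihAB ihA
  | rr hψ _ ih => exact hT _ hψ ih

theorem of_deriv {V : Set GLPFormula} (hV : ∀ B ∈ V, RRClosure U Pi n φ B) (h : Deriv V A) :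
    RRClosure U Pi n φ A := by
  induction h with
  | ax hA => exact hV _ hA
  | glp hA => exact base (Deriv.glp hA)
  | mp _ _ ihAB ihA => exact mp ihAB ihA

theorem dia_of_top_mem (htop : top ∈ Pi) : RRClosure U Pi n φ (dia n φ) :=
  mp (base (Deriv.glp (Proof.dia_imp_dia Proof.top_and_imp)))
    (rr htop (base (Deriv.glp Proof.trivial)))

end RRClosure

theorem rr_closure_eq_dia_general (U Pi : Set GLPFormula) (n : ℕ)
    (φ : GLPFormula)
    (htop : GLPFormula.top ∈ Pi)
    (hPi : ∀ ψ ∈ Pi, Deriv U (ψ.imp (box n ψ))) :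
    ∀ A, RRClosure U Pi n φ A ↔ Deriv (insert (dia n φ) U) A := by
  intro A
  constructor
  · refine fun h => h.deriv_of_closed (Set.subset_insert _ _) fun ψ hψ => ?_
    exact Deriv.dia_and_of_imp_box ((hPi ψ hψ).mono (Set.subset_insert _ _))
      (Deriv.ax (Set.mem_insert _ _))
  · refine RRClosure.of_deriv ?_
    rintro B (rfl | hB)
    · exact RRClosure.dia_of_top_mem htop
    · exact RRClosure.base (Deriv.ax hB)

/-- for m ≤ n, if every ψ ∈ Π_m satisfies U ⊢ ψ → [n]ψ (provable
Σ_{n+1}-completeness), then the closure of U under Π_m-RR^n(U+φ) is exactly U + ⟨n⟩φ. -/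
theorem rr_closure_eq_dia (U Pi : Set GLPFormula) (m n : ℕ) (hmn : m ≤ n)
    (φ : GLPFormula)
    (htop : GLPFormula.top ∈ Pi)
    (hPi : ∀ ψ ∈ Pi, Deriv U (ψ.imp (box n ψ))) :
    ∀ A, RRClosure U Pi n φ A ↔ Deriv (insert (dia n φ) U) A :=
  rr_closure_eq_dia_general U Pi n φ htop hPi
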